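/- Let b ≥ β > 0 and let f : 𝔻 → ℝ be defined by f(r·e^{iθ}) = (1/(r(1−r)^{b−β}))·sin(1/(1−r)^b) for 1/2 ≤ r < 1 and f(r·e^{iθ}) = 1 for 0 ≤ r < 1/2. Then f satisfies the VWMO condition, and moreover there is a constant C > 0 such that |f̂(z)| ≤ C·(1−|z|)^β for all z ∈ 𝔻; in particular f̂(z) → 0 as |z| → 1. -/

import Mathlib

open MeasureTheory Set

noncomputable section

/-- The normalized area measure on the plane: planar Lebesgue measure divided by `π`. -/
def dA : Measure ℂ := (ENNReal.ofReal Real.pi)⁻¹ • volume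

/-- The open unit disc `𝔻`. -/
def unitDisc : Set ℂ := {z : ℂ | ‖z‖ < 1}

/-- The argument `θ` of `z`, normalized to lie in `[0, 2π)`. -/
def theta (z : ℂ) : ℝ := toIcoMod Real.two_pi_pos 0 (Complex.arg z)

/-- The angle of `ζ`, normalized to lie in `[theta z, theta z + 2π)`;
for `ζ ∈ B(z)` this is the angle `θ̃ ∈ [θ, θ + π(1-r)]` of the paper's convention. -/
def angFrom (z ζ : ℂ) : ℝ := toIcoMod Real.two_pi_pos (theta z) (Complex.arg ζ)

/-- The polar rectangle `{ρ e^{iφ} : r₁ ≤ ρ ≤ r₂, φ₁ ≤ φ ≤ φ₂}`. -/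
def polarRect (r₁ r₂ φ₁ φ₂ : ℝ) : Set ℂ :=
  {w : ℂ | ∃ ρ φ : ℝ, r₁ ≤ ρ ∧ ρ ≤ r₂ ∧ φ₁ ≤ φ ∧ φ ≤ φ₂ ∧
    w = (ρ : ℂ) * Complex.exp ((φ : ℂ) * Complex.I)}

/-- The set `B(z)` for `z = r e^{iθ} ∈ 𝔻`. -/
def Bz (z : ℂ) : Set ℂ :=
  polarRect ‖z‖ (1 - (1 - ‖z‖) / 2) (theta z) (theta z + Real.pi * (1 - ‖z‖))

/-- The set `B(z, ζ)` for `ζ ∈ B(z)`. -/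
def Bzz (z ζ : ℂ) : Set ℂ := polarRect ‖z‖ ‖ζ‖ (theta z) (angFrom z ζ)

/-- The set `B(ζ₁, ζ₂)` for points `ζ₁ ≾ ζ₂` of `B(z)`. -/
def Bsub (z ζ₁ ζ₂ : ℂ) : Set ℂ := polarRect ‖ζ₁‖ ‖ζ₂‖ (angFrom z ζ₁) (angFrom z ζ₂)

/-- The relation `ζ₁ ≾ ζ₂` for points of `B(z)`: `ρ₁ ≤ ρ₂` and `φ₁ ≤ φ₂`. -/
def precSim (z ζ₁ ζ₂ : ℂ) : Prop := ‖ζ₁‖ ≤ ‖ζ₂‖ ∧ angFrom z ζ₁ ≤ angFrom z ζ₂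

/-- The average `f̂_K = (1/|K|) ∫_K f dA` of `f` over a set `K`. -/
def avgOn (f : ℂ → ℂ) (K : Set ℂ) : ℂ := ((dA K).toReal)⁻¹ • ∫ w in K, f w ∂dA

/-- The average function `f̂(z) = f̂_{B(z)}`. -/
def avg (f : ℂ → ℂ) (z : ℂ) : ℂ := avgOn f (Bz z)

/-- The quantity `(1/|B(z)|) |∫_{B(z,ζ)} (f(ξ) - f̂(z)) dA(ξ)|`. -/
def wQuot (f : ℂ → ℂ) (z ζ : ℂ) : ℝ :=
  ((dA (Bz z)).toReal)⁻¹ * ‖∫ ξ in Bzz z ζ, (f ξ - avg f z) ∂dA‖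

/-- The BWMO condition: `‖f‖_BWMO < ∞`. -/
def IsBWMO (f : ℂ → ℂ) : Prop := ∃ C : ℝ, ∀ z ∈ unitDisc, ∀ ζ ∈ Bz z, wQuot f z ζ ≤ C

/-- The BWMO seminorm `‖f‖_BWMO`. -/
def bwmoNorm (f : ℂ → ℂ) : ℝ :=
  sSup {c : ℝ | ∃ z ∈ unitDisc, ∃ ζ ∈ Bz z, c = wQuot f z ζ}

/-- The VWMO condition:
`(1/|B(z)|) sup_{ζ ∈ B(z)} |∫_{B(z,ζ)} (f - f̂(z)) dA| → 0` as `|z| → 1`. -/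
def IsVWMO (f : ℂ → ℂ) : Prop :=
  ∀ ε > (0:ℝ), ∃ r₀ < (1:ℝ), ∀ z ∈ unitDisc, r₀ ≤ ‖z‖ → ∀ ζ ∈ Bz z, wQuot f z ζ ≤ ε

/-- The Bergman-metric disc `D(z,1)` of radius `1` centered at `z`. -/
def Dball (z : ℂ) : Set ℂ :=
  {w : ℂ | ‖w‖ < 1 ∧ ‖(z - w) / (1 - (starRingEnd ℂ) w * z)‖ < Real.tanh 1}

/-- The hyperbolic average `f̂₁(z) = (1/|D(z,1)|) ∫_{D(z,1)} f dA` of a real-valued `f`. -/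
def avg1 (f : ℂ → ℝ) (z : ℂ) : ℝ := ((dA (Dball z)).toReal)⁻¹ * ∫ w in Dball z, f w ∂dA

/-- The mean oscillation `(1/|D(z,1)|) ∫_{D(z,1)} |f - f̂₁(z)| dA` of a real-valued `f`. -/
def meanOsc1 (f : ℂ → ℝ) (z : ℂ) : ℝ :=
  ((dA (Dball z)).toReal)⁻¹ * ∫ ξ in Dball z, |f ξ - avg1 f z| ∂dA

/-- The Berezin transform `f̃(z) = ∫_𝔻 f(w) |k_z(w)|² dA(w)`,
where `k_z(w) = (1-|z|²)/(1-w z̄)²`. -/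
def berezin (f : ℂ → ℂ) (z : ℂ) : ℂ :=
  ∫ w in unitDisc, f w * ((((1 - ‖z‖ ^ 2) ^ 2 / ‖1 - w * (starRingEnd ℂ) z‖ ^ 4 : ℝ)) : ℂ) ∂dA

/-- The example symbol of Section 4:
`f(r e^{iθ}) = (1/(r (1-r)^{b-β})) sin(1/(1-r)^b)` for `r ≥ 1/2`, and `1` for `r < 1/2`. -/
def fEx (b β : ℝ) (z : ℂ) : ℝ :=
  if ‖z‖ < 1 / 2 then 1
  else (1 / (‖z‖ * (1 - ‖z‖) ^ (b - β))) * Real.sin (1 / (1 - ‖z‖) ^ b)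

end

/-! The function `fEx b β` is radial, `fEx b β ξ = g(|ξ|)`, and `B(z)`, `B(z, ζ)` are polar
rectangles, so in polar coordinates `∫_{B(z,ζ)} g(|ξ|) dA` is the angular width times
`∫_r^{|ζ|} ρ g(ρ) dρ`, while
`|B(z)| ≍ (1 - r)²`. Hence `|f̂(z)|` and the VWMO quotient are both at most a constant times
`(1 - r)⁻¹ sup_{r ≤ r' ≤ (1 + r)/2} |∫_r^{r'} ρ g(ρ) dρ|`.

For `ρ ≥ 1/2` we have `ρ g(ρ) = sin((1 - ρ)^{-b}) (1 - ρ)^{β - b}`, which is, up to a term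
`O((1 - ρ)^β)`, the derivative of `-b⁻¹ (1 - ρ)^{β + 1} cos((1 - ρ)^{-b})`. So the cancellation in
the oscillating factor makes the radial integral `O((1 - r)^{β + 1})`; for `r < 1/2` this is
trivial. Both quantities are therefore `O((1 - r)^β)`, which tends to `0` as `r → 1`. -/

open Real Filter Topology

lemma polarRect_eq_image (r₁ r₂ φ₁ φ₂ : ℝ) :
    polarRect r₁ r₂ φ₁ φ₂ =
      (fun p : ℝ × ℝ => (p.1 : ℂ) * Complex.exp (p.2 * Complex.I)) '' Icc r₁ r₂ ×ˢ Icc φ₁ φ₂ := by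
  ext w
  constructor
  · rintro ⟨ρ, φ, h₁, h₂, h₃, h₄, rfl⟩
    exact ⟨(ρ, φ), ⟨⟨h₁, h₂⟩, h₃, h₄⟩, rfl⟩
  · rintro ⟨⟨ρ, φ⟩, ⟨⟨h₁, h₂⟩, h₃, h₄⟩, rfl⟩
    exact ⟨ρ, φ, h₁, h₂, h₃, h₄, rfl⟩

lemma isCompact_polarRect (r₁ r₂ φ₁ φ₂ : ℝ) : IsCompact (polarRect r₁ r₂ φ₁ φ₂) := by
  rw [polarRect_eq_image]
  exact (isCompact_Icc.prod isCompact_Icc).image (by fun_prop)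

lemma polarRect_mono {r₁ r₂ r₂' φ₁ φ₂ φ₂' : ℝ} (hr : r₂ ≤ r₂') (hφ : φ₂ ≤ φ₂') :
    polarRect r₁ r₂ φ₁ φ₂ ⊆ polarRect r₁ r₂' φ₁ φ₂' := by
  rintro w ⟨ρ, φ, h₁, h₂, h₃, h₄, rfl⟩
  exact ⟨ρ, φ, h₁, h₂.trans hr, h₃, h₄.trans hφ, rfl⟩

lemma norm_ofReal_mul_exp_mul_I {ρ : ℝ} (hρ : 0 ≤ ρ) (φ : ℝ) :
    ‖(ρ : ℂ) * Complex.exp (φ * Complex.I)‖ = ρ := by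
  rw [norm_mul, Complex.norm_exp_ofReal_mul_I, mul_one, Complex.norm_of_nonneg hρ]

lemma norm_mem_Icc_of_mem_polarRect {r₁ r₂ φ₁ φ₂ : ℝ} (hr₁ : 0 ≤ r₁) {ξ : ℂ}
    (hξ : ξ ∈ polarRect r₁ r₂ φ₁ φ₂) : ‖ξ‖ ∈ Icc r₁ r₂ := by
  obtain ⟨ρ, φ, h₁, h₂, -, -, rfl⟩ := hξ
  rw [norm_ofReal_mul_exp_mul_I (hr₁.trans h₁)]
  exact ⟨h₁, h₂⟩

lemma ofReal_mul_exp_mem_polarRect_iff {r₁ r₂ φ₁ φ₂ ρ φ : ℝ} (hr₁ : 0 ≤ r₁) (hρ : 0 < ρ)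
    (hφ : φ ∈ Ioo (-π) π) (hφ₁ : -π < φ₁) (hφ₂ : φ₂ ≤ π) :
    (ρ : ℂ) * Complex.exp (φ * Complex.I) ∈ polarRect r₁ r₂ φ₁ φ₂ ↔
      ρ ∈ Icc r₁ r₂ ∧ φ ∈ Icc φ₁ φ₂ := by
  refine ⟨fun ⟨ρ', φ', h₁, h₂, h₃, h₄, he⟩ => ?_,
    fun ⟨⟨h₁, h₂⟩, h₃, h₄⟩ => ⟨ρ, φ, h₁, h₂, h₃, h₄, rfl⟩⟩
  have hρ' : ρ = ρ' := by
    rw [← norm_ofReal_mul_exp_mul_I hρ.le φ, he, norm_ofReal_mul_exp_mul_I (hr₁.trans h₁)]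
  subst hρ'
  have harg : ∀ ψ ∈ Ioc (-π) π, Complex.arg (ρ * Complex.exp (ψ * Complex.I)) = ψ := fun ψ hψ => by
    rw [Complex.arg_real_mul _ hρ, Complex.arg_exp_mul_I, toIocMod_eq_self]
    simpa [two_mul, ← sub_eq_add_neg] using hψ
  have hφ' : φ = φ' := by
    rw [← harg φ (Ioo_subset_Ioc_self hφ), he, harg φ' ⟨hφ₁.trans_le h₃, h₄.trans hφ₂⟩]
  subst hφ'
  exact ⟨⟨h₁, h₂⟩, h₃, h₄⟩

lemma polarRect_add (r₁ r₂ φ₁ φ₂ t : ℝ) :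
    polarRect r₁ r₂ (φ₁ + t) (φ₂ + t) =
      (Complex.exp (t * Complex.I) * ·) '' polarRect r₁ r₂ φ₁ φ₂ := by
  have hrot : ∀ ρ φ : ℝ, Complex.exp (t * Complex.I) * (ρ * Complex.exp (φ * Complex.I)) =
      ρ * Complex.exp (↑(φ + t) * Complex.I) := fun ρ φ => by
    rw [mul_left_comm, ← Complex.exp_add]; push_cast; ring_nf
  ext w
  constructor
  · rintro ⟨ρ, φ, h₁, h₂, h₃, h₄, rfl⟩
    refine ⟨ρ * Complex.exp (↑(φ - t) * Complex.I),
      ⟨ρ, φ - t, h₁, h₂, by linarith, by linarith, rfl⟩, ?_⟩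
    exact (hrot ρ (φ - t)).trans (by rw [sub_add_cancel])
  · rintro ⟨_, ⟨ρ, φ, h₁, h₂, h₃, h₄, rfl⟩, rfl⟩
    exact ⟨ρ, φ + t, h₁, h₂, by linarith, by linarith, hrot ρ φ⟩

lemma exp_mul_I_mul_eq_rotation (t : ℝ) :
    (Complex.exp (t * Complex.I) * ·) = rotation (Circle.exp t) := by
  ext ξ; simp [Circle.coe_exp]

lemma measurePreserving_exp_mul_I_mul (t : ℝ) :
    MeasurePreserving (Complex.exp (t * Complex.I) * ·) volume volume :=
  exp_mul_I_mul_eq_rotation t ▸ (rotation (Circle.exp t)).measurePreserving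

lemma measurableEmbedding_exp_mul_I_mul (t : ℝ) :
    MeasurableEmbedding (Complex.exp (t * Complex.I) * ·) :=
  exp_mul_I_mul_eq_rotation t ▸ (rotation (Circle.exp t)).toHomeomorph.measurableEmbedding

lemma setIntegral_polarRect_radial_of_lt_pi {r₁ r₂ φ₁ φ₂ : ℝ} (g : ℝ → ℝ) (hr₁ : 0 ≤ r₁)
    (hr : r₁ ≤ r₂) (hφ₁ : -π < φ₁) (hφ : φ₁ ≤ φ₂) (hφ₂ : φ₂ < π) :
    ∫ ξ in polarRect r₁ r₂ φ₁ φ₂, g ‖ξ‖ = (φ₂ - φ₁) * ∫ ρ in r₁..r₂, ρ * g ρ := by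
  set S := Icc r₁ r₂ ×ˢ Icc φ₁ φ₂
  have hS : ∀ p ∈ polarCoord.target, p.1 • (polarRect r₁ r₂ φ₁ φ₂).indicator (g ‖·‖)
      (Complex.polarCoord.symm p) = S.indicator (fun p => p.1 * g p.1) p := by
    rintro ⟨ρ, φ⟩ ⟨hρ, hφ⟩
    have hsymm : Complex.polarCoord.symm (ρ, φ) = ρ * Complex.exp (φ * Complex.I) := by
      rw [Complex.polarCoord_symm_apply, Complex.exp_mul_I]; push_cast; ring
    by_cases h : (ρ, φ) ∈ S
    · rw [indicator_of_mem h, indicator_of_mem, hsymm, norm_ofReal_mul_exp_mul_I (le_of_lt hρ),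
        smul_eq_mul]
      rwa [hsymm, ofReal_mul_exp_mem_polarRect_iff hr₁ hρ hφ hφ₁ hφ₂.le]
    · rw [indicator_of_notMem h, indicator_of_notMem, smul_zero]
      rwa [hsymm, ofReal_mul_exp_mem_polarRect_iff hr₁ hρ hφ hφ₁ hφ₂.le]
  have htarget : polarCoord.target ∩ S = (Ioi 0 ∩ Icc r₁ r₂) ×ˢ Icc φ₁ φ₂ := by
    rw [polarCoord_target, prod_inter_prod, inter_eq_right.mpr (Icc_subset_Ioo hφ₁ hφ₂)]
  have hIoc : (Ioi 0 ∩ Icc r₁ r₂ : Set ℝ) =ᵐ[volume] Ioc r₁ r₂ := by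
    refine (Ioi_ae_eq_Ici.inter (ae_eq_refl _)).trans ?_
    rw [inter_eq_right.mpr (Icc_subset_Ici_self.trans (Ici_subset_Ici.mpr hr₁))]
    exact Ioc_ae_eq_Icc.symm
  rw [← integral_indicator (isCompact_polarRect _ _ _ _).measurableSet,
    ← Complex.integral_comp_polarCoord_symm,
    setIntegral_congr_fun polarCoord.open_target.measurableSet hS,
    setIntegral_indicator (measurableSet_Icc.prod measurableSet_Icc), htarget,
    Measure.volume_eq_prod]
  have hprod := setIntegral_prod_mul (fun ρ : ℝ => ρ * g ρ) (fun _ : ℝ => (1 : ℝ))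
    (Ioi 0 ∩ Icc r₁ r₂) (Icc φ₁ φ₂) (μ := volume) (ν := volume)
  simp only [mul_one] at hprod
  rw [hprod, setIntegral_congr_set hIoc, ← intervalIntegral.integral_of_le hr, setIntegral_const,
    measureReal_def, Real.volume_Icc, ENNReal.toReal_ofReal (sub_nonneg.mpr hφ), smul_eq_mul,
    mul_one, mul_comm]

lemma setIntegral_polarRect_radial {r₁ r₂ φ₁ φ₂ : ℝ} (g : ℝ → ℝ) (hr₁ : 0 ≤ r₁) (hr : r₁ ≤ r₂)
    (hφ : φ₁ ≤ φ₂) (hφ₂ : φ₂ < φ₁ + 2 * π) :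
    ∫ ξ in polarRect r₁ r₂ φ₁ φ₂, g ‖ξ‖ = (φ₂ - φ₁) * ∫ ρ in r₁..r₂, ρ * g ρ := by
  -- rotate the sector to be centred at angle `0`, inside the angular range `(-π, π)` of
  -- `polarCoord`
  set t := (φ₁ + φ₂) / 2
  set a := (φ₂ - φ₁) / 2 with ha
  have hrect : polarRect r₁ r₂ φ₁ φ₂ = polarRect r₁ r₂ (-a + t) (a + t) := by
    congr 1 <;> ring
  rw [hrect, polarRect_add, (measurePreserving_exp_mul_I_mul t).setIntegral_image_emb
    (measurableEmbedding_exp_mul_I_mul t)]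
  simp only [norm_mul, Complex.norm_exp_ofReal_mul_I, one_mul]
  rw [setIntegral_polarRect_radial_of_lt_pi g hr₁ hr (by linarith) (by linarith) (by linarith)]
  ring

lemma measureReal_polarRect {r₁ r₂ φ₁ φ₂ : ℝ} (hr₁ : 0 ≤ r₁) (hr : r₁ ≤ r₂)
    (hφ : φ₁ ≤ φ₂) (hφ₂ : φ₂ < φ₁ + 2 * π) :
    volume.real (polarRect r₁ r₂ φ₁ φ₂) = (φ₂ - φ₁) * ((r₂ ^ 2 - r₁ ^ 2) / 2) := by
  have h := setIntegral_polarRect_radial (fun _ => 1) hr₁ hr hφ hφ₂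
  simpa [integral_id] using h

lemma angFrom_ofReal_mul_exp {z : ℂ} {ρ φ : ℝ} (hρ : 0 < ρ)
    (hφ : φ ∈ Ico (theta z) (theta z + 2 * π)) :
    angFrom z (ρ * Complex.exp (φ * Complex.I)) = φ := by
  rw [angFrom, Complex.arg_real_mul _ hρ, Complex.arg_exp_mul_I, toIcoMod_toIocMod,
    (toIcoMod_eq_self two_pi_pos).mpr hφ]

lemma angFrom_mem_Icc_of_mem_Bz {z ζ : ℂ} (hz : ‖z‖ < 1) (hζ : ζ ∈ Bz z) :
    angFrom z ζ ∈ Icc (theta z) (theta z + π * (1 - ‖z‖)) := by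
  refine ⟨(toIcoMod_mem_Ico _ _ _).1, ?_⟩
  obtain ⟨ρ, φ, h₁, -, h₃, h₄, rfl⟩ := hζ
  rcases ((norm_nonneg z).trans h₁).eq_or_lt with hρ | hρ
  · obtain rfl : z = 0 := norm_eq_zero.mp (le_antisymm (hρ ▸ h₁) (norm_nonneg z))
    simp [angFrom, theta, ← hρ, pi_pos.le]
  · rw [angFrom_ofReal_mul_exp hρ ⟨h₃, by nlinarith [pi_pos, norm_nonneg z]⟩]
    exact h₄

lemma Bzz_subset_Bz {z ζ : ℂ} (hz : ‖z‖ < 1) (hζ : ζ ∈ Bz z) : Bzz z ζ ⊆ Bz z :=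
  polarRect_mono (norm_mem_Icc_of_mem_polarRect (norm_nonneg z) hζ).2
    (angFrom_mem_Icc_of_mem_Bz hz hζ).2

lemma dA_toReal (K : Set ℂ) : (dA K).toReal = π⁻¹ * volume.real K := by
  rw [← measureReal_def, dA, measureReal_ennreal_smul_apply, ENNReal.toReal_inv,
    ENNReal.toReal_ofReal pi_pos.le]

lemma setIntegral_dA {E : Type*} [NormedAddCommGroup E] [NormedSpace ℝ E] (f : ℂ → E)
    (K : Set ℂ) : ∫ w in K, f w ∂dA = π⁻¹ • ∫ w in K, f w := by
  rw [dA, Measure.restrict_smul, integral_smul_measure, ENNReal.toReal_inv,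
    ENNReal.toReal_ofReal pi_pos.le]

lemma avgOn_eq (f : ℂ → ℂ) (K : Set ℂ) : avgOn f K = (volume.real K)⁻¹ • ∫ w in K, f w := by
  rw [avgOn, dA_toReal, setIntegral_dA, smul_smul, mul_inv, inv_inv, mul_assoc, mul_left_comm,
    mul_inv_cancel₀ pi_ne_zero, mul_one]

lemma wQuot_eq (f : ℂ → ℂ) (z ζ : ℂ) :
    wQuot f z ζ = (volume.real (Bz z))⁻¹ * ‖∫ ξ in Bzz z ζ, (f ξ - avg f z)‖ := by
  rw [wQuot, dA_toReal, setIntegral_dA, norm_smul, norm_inv, Real.norm_of_nonneg pi_pos.le,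
    mul_inv, inv_inv, mul_assoc, mul_left_comm, mul_inv_cancel_left₀ pi_ne_zero]

lemma measureReal_Bz {z : ℂ} (hz : ‖z‖ < 1) :
    volume.real (Bz z) = π * (1 - ‖z‖) * ((1 - ‖z‖) * (1 + 3 * ‖z‖) / 8) := by
  rw [Bz, measureReal_polarRect (norm_nonneg z) (by linarith) (by nlinarith [pi_pos])
    (by nlinarith [pi_pos, norm_nonneg z])]
  ring

lemma setIntegral_Bz_radial (g : ℝ → ℝ) {z : ℂ} (hz : ‖z‖ < 1) :
    ∫ ξ in Bz z, g ‖ξ‖ = π * (1 - ‖z‖) * ∫ ρ in ‖z‖..1 - (1 - ‖z‖) / 2, ρ * g ρ := by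
  rw [Bz, setIntegral_polarRect_radial g (norm_nonneg z) (by linarith) (by nlinarith [pi_pos])
    (by nlinarith [pi_pos, norm_nonneg z]), add_sub_cancel_left]

lemma setIntegral_Bzz_radial (g : ℝ → ℝ) {z ζ : ℂ} (hz : ‖z‖ < 1) (hζ : ζ ∈ Bz z) :
    ∫ ξ in Bzz z ζ, g ‖ξ‖ = (angFrom z ζ - theta z) * ∫ ρ in ‖z‖..‖ζ‖, ρ * g ρ := by
  have hang := angFrom_mem_Icc_of_mem_Bz hz hζ
  rw [Bzz, setIntegral_polarRect_radial g (norm_nonneg z)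
    (norm_mem_Icc_of_mem_polarRect (norm_nonneg z) hζ).1 hang.1
    (by nlinarith [hang.2, pi_pos, norm_nonneg z])]

lemma norm_avg_radial (g : ℝ → ℝ) {z : ℂ} (hz : ‖z‖ < 1) :
    ‖avg (fun ξ => (g ‖ξ‖ : ℂ)) z‖ =
      8 / ((1 - ‖z‖) * (1 + 3 * ‖z‖)) * |∫ ρ in ‖z‖..1 - (1 - ‖z‖) / 2, ρ * g ρ| := by
  have hx : 0 < 1 - ‖z‖ := by linarith
  have hy : 0 < 1 + 3 * ‖z‖ := by linarith [norm_nonneg z]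
  rw [avg, avgOn_eq, integral_complex_ofReal, setIntegral_Bz_radial g hz, measureReal_Bz hz,
    norm_smul, Complex.norm_real, norm_inv, Real.norm_eq_abs, Real.norm_eq_abs]
  simp only [abs_mul, abs_div, abs_of_pos pi_pos, abs_of_pos hx, abs_of_pos hy, Nat.abs_ofNat]
  field_simp

lemma wQuot_radial_le {g : ℝ → ℝ} {z ζ : ℂ} (hz : ‖z‖ < 1)
    (hg : IntegrableOn (fun ξ : ℂ => g ‖ξ‖) (Bz z)) (hζ : ζ ∈ Bz z) :
    wQuot (fun ξ => (g ‖ξ‖ : ℂ)) z ζ ≤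
      8 / ((1 - ‖z‖) * (1 + 3 * ‖z‖)) * |∫ ρ in ‖z‖..‖ζ‖, ρ * g ρ| +
        ‖avg (fun ξ => (g ‖ξ‖ : ℂ)) z‖ := by
  set a := avg (fun ξ => (g ‖ξ‖ : ℂ)) z
  set J := ∫ ρ in ‖z‖..‖ζ‖, ρ * g ρ
  have hx : 0 < 1 - ‖z‖ := by linarith
  have hy : 0 < 1 + 3 * ‖z‖ := by linarith [norm_nonneg z]
  have hsub := Bzz_subset_Bz hz hζ
  have hang := angFrom_mem_Icc_of_mem_Bz hz hζ
  have hV : volume.real (Bzz z ζ) ≤ volume.real (Bz z) :=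
    measureReal_mono hsub (isCompact_polarRect _ _ _ _).measure_lt_top.ne
  have hVpos : 0 < volume.real (Bz z) := by rw [measureReal_Bz hz]; positivity
  have hsplit : ∫ ξ in Bzz z ζ, ((g ‖ξ‖ : ℂ) - a) =
      ((angFrom z ζ - theta z) * J : ℝ) - volume.real (Bzz z ζ) • a := by
    have hf : IntegrableOn (fun ξ : ℂ => (g ‖ξ‖ : ℂ)) (Bzz z ζ) := (hg.mono_set hsub).ofReal
    have hc : IntegrableOn (fun _ : ℂ => a) (Bzz z ζ) :=
      integrableOn_const (isCompact_polarRect _ _ _ _).measure_lt_top.ne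
    rw [integral_sub hf hc, integral_complex_ofReal,
      setIntegral_Bzz_radial g hz hζ, setIntegral_const]
  have hnorm : ‖∫ ξ in Bzz z ζ, ((g ‖ξ‖ : ℂ) - a)‖ ≤
      π * (1 - ‖z‖) * |J| + volume.real (Bz z) * ‖a‖ := by
    rw [hsplit]
    refine (norm_sub_le _ _).trans (add_le_add ?_ ?_)
    · rw [Complex.norm_real, Real.norm_eq_abs, abs_mul, abs_of_nonneg (by linarith [hang.1])]
      exact mul_le_mul_of_nonneg_right (by linarith [hang.2]) (abs_nonneg J)
    · rw [norm_smul, Real.norm_of_nonneg measureReal_nonneg]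
      exact mul_le_mul_of_nonneg_right hV (norm_nonneg a)
  rw [wQuot_eq]
  calc (volume.real (Bz z))⁻¹ * ‖∫ ξ in Bzz z ζ, ((g ‖ξ‖ : ℂ) - a)‖
      ≤ (volume.real (Bz z))⁻¹ * (π * (1 - ‖z‖) * |J| + volume.real (Bz z) * ‖a‖) := by gcongr
    _ = 8 / ((1 - ‖z‖) * (1 + 3 * ‖z‖)) * |J| + ‖a‖ := by
      rw [mul_add, inv_mul_cancel_left₀ hVpos.ne', measureReal_Bz hz]
      field_simp

lemma eight_div_mul_rpow_succ_le {r C β : ℝ} (hr₀ : 0 ≤ r) (hr₁ : r < 1) (hC : 0 ≤ C) :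
    8 / ((1 - r) * (1 + 3 * r)) * (C * (1 - r) ^ (β + 1)) ≤ 8 * C * (1 - r) ^ β := by
  have hx : 0 < 1 - r := by linarith
  rw [rpow_add_one hx.ne', div_mul_eq_mul_div, div_le_iff₀ (by positivity)]
  have : 0 ≤ 8 * C * (1 - r) ^ β * (1 - r) := by positivity
  nlinarith

lemma norm_avg_le_of_radial {g : ℝ → ℝ} {z : ℂ} (hz : ‖z‖ < 1) {C β : ℝ} (hC : 0 ≤ C)
    (hJ : |∫ ρ in ‖z‖..1 - (1 - ‖z‖) / 2, ρ * g ρ| ≤ C * (1 - ‖z‖) ^ (β + 1)) :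
    ‖avg (fun ξ => (g ‖ξ‖ : ℂ)) z‖ ≤ 8 * C * (1 - ‖z‖) ^ β := by
  have hx : 0 < 1 - ‖z‖ := by linarith
  have hy : 0 < 1 + 3 * ‖z‖ := by linarith [norm_nonneg z]
  rw [norm_avg_radial g hz]
  exact (mul_le_mul_of_nonneg_left hJ (by positivity)).trans
    (eight_div_mul_rpow_succ_le (norm_nonneg z) hz hC)

lemma wQuot_le_of_radial {g : ℝ → ℝ} {z ζ : ℂ} (hz : ‖z‖ < 1)
    (hg : IntegrableOn (fun ξ : ℂ => g ‖ξ‖) (Bz z)) (hζ : ζ ∈ Bz z) {C β : ℝ} (hC : 0 ≤ C)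
    (hJ : ∀ r' ∈ Icc ‖z‖ (1 - (1 - ‖z‖) / 2),
      |∫ ρ in ‖z‖..r', ρ * g ρ| ≤ C * (1 - ‖z‖) ^ (β + 1)) :
    wQuot (fun ξ => (g ‖ξ‖ : ℂ)) z ζ ≤ 16 * C * (1 - ‖z‖) ^ β := by
  have hx : 0 < 1 - ‖z‖ := by linarith
  have hy : 0 < 1 + 3 * ‖z‖ := by linarith [norm_nonneg z]
  have hζ' := norm_mem_Icc_of_mem_polarRect (norm_nonneg z) hζ
  have h₁ := (mul_le_mul_of_nonneg_left (hJ _ hζ') (by positivity)).trans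
    (eight_div_mul_rpow_succ_le (norm_nonneg z) hz hC)
  have h₂ := norm_avg_le_of_radial hz hC (hJ _ ⟨hζ'.1.trans hζ'.2, le_rfl⟩)
  linarith [wQuot_radial_le hz hg hζ]

lemma hasDerivAt_rpow_mul_cos_inv_rpow {b β ρ : ℝ} (hb : b ≠ 0) (hρ : ρ < 1) :
    HasDerivAt (fun x => b⁻¹ * ((1 - x) ^ (β + 1) * cos ((1 - x) ^ b)⁻¹))
      (-(sin ((1 - ρ) ^ b)⁻¹ * (1 - ρ) ^ (β - b)) -
        (β + 1) / b * ((1 - ρ) ^ β * cos ((1 - ρ) ^ b)⁻¹))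
      ρ := by
  have hx : 0 < 1 - ρ := by linarith
  have hsub : HasDerivAt (fun x : ℝ => 1 - x) (-1) ρ := by
    simpa using (hasDerivAt_id ρ).const_sub 1
  have hpow : ∀ p : ℝ, HasDerivAt (fun x : ℝ => (1 - x) ^ p) (-(p * (1 - ρ) ^ (p - 1))) ρ :=
    fun p => by simpa using (hsub.rpow_const (p := p) (Or.inl hx.ne'))
  have hinv := ((hpow b).inv (rpow_pos_of_pos hx b).ne').cos
  refine (((hpow (β + 1)).mul hinv).const_mul b⁻¹).congr_deriv ?_
  have e₁ : (1 - ρ) ^ (β + 1) * (1 - ρ) ^ (b - 1) = (1 - ρ) ^ (β - b) * ((1 - ρ) ^ b) ^ 2 := by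
    rw [← rpow_natCast, ← rpow_mul hx.le, ← rpow_add hx, ← rpow_add hx]; ring_nf
  simp only [Pi.inv_apply, add_sub_cancel_right]
  -- keeps `field_simp` from rewriting the argument of `sin`
  generalize sin ((1 - ρ) ^ b)⁻¹ = s
  field_simp
  linear_combination (-b * s) * e₁

lemma abs_integral_sin_inv_rpow_mul_rpow_le {b β r r' : ℝ} (hb : 0 < b) (hβ : 0 ≤ β)
    (hr : r ≤ r') (hr' : r' < 1) :
    |∫ ρ in r..r', sin ((1 - ρ) ^ b)⁻¹ * (1 - ρ) ^ (β - b)| ≤ (β + 3) / b * (1 - r) ^ (β + 1) := by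
  set S := fun x : ℝ => sin ((1 - x) ^ b)⁻¹ * (1 - x) ^ (β - b)
  set c := fun x : ℝ => (1 - x) ^ β * cos ((1 - x) ^ b)⁻¹
  set H := fun x : ℝ => b⁻¹ * ((1 - x) ^ (β + 1) * cos ((1 - x) ^ b)⁻¹)
  have hlt : ∀ x ∈ uIcc r r', x < 1 := fun x hx => ((uIcc_of_le hr ▸ hx).2).trans_lt hr'
  have hcont : ∀ x ∈ uIcc r r', ContinuousAt S x ∧ ContinuousAt c x := fun x hx => by
    have hx : 0 < 1 - x := sub_pos.mpr (hlt x hx)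
    constructor <;>
      fun_prop (disch := first | exact Or.inl hx.ne' | exact (rpow_pos_of_pos hx _).ne')
  have hS : IntervalIntegrable S volume r r' :=
    (continuousOn_of_forall_continuousAt fun x hx => (hcont x hx).1).intervalIntegrable
  have hc : IntervalIntegrable c volume r r' :=
    (continuousOn_of_forall_continuousAt fun x hx => (hcont x hx).2).intervalIntegrable
  have hFTC : ∫ x in r..r', (-S x - (β + 1) / b * c x) = H r' - H r :=
    intervalIntegral.integral_eq_sub_of_hasDerivAt
      (fun x hx => hasDerivAt_rpow_mul_cos_inv_rpow hb.ne' (hlt x hx)) (hS.neg.sub (hc.const_mul _))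
  rw [intervalIntegral.integral_sub (f := fun x => -S x) hS.neg (hc.const_mul _),
    intervalIntegral.integral_neg,
    intervalIntegral.integral_const_mul] at hFTC
  have hH : ∀ x ∈ Icc r r', |H x| ≤ b⁻¹ * (1 - r) ^ (β + 1) := fun x hxI => by
    have hx : 0 ≤ 1 - x := by linarith [hxI.2]
    calc |H x| = b⁻¹ * ((1 - x) ^ (β + 1) * |cos ((1 - x) ^ b)⁻¹|) := by
          rw [abs_mul, abs_mul, abs_of_pos (inv_pos.mpr hb), abs_of_nonneg (rpow_nonneg hx _)]
      _ ≤ b⁻¹ * (1 - r) ^ (β + 1) := by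
          grw [abs_cos_le_one, mul_one,
            rpow_le_rpow (y := 1 - r) (z := β + 1) hx (by linarith [hxI.1]) (by linarith)]
  have hcint : |∫ x in r..r', c x| ≤ (1 - r) ^ (β + 1) := by
    have hbound : ∀ x ∈ uIoc r r', ‖c x‖ ≤ (1 - r) ^ β := fun x hxI => by
      rw [uIoc_of_le hr] at hxI
      have hx : 0 ≤ 1 - x := by linarith [hxI.2]
      rw [Real.norm_eq_abs, abs_mul, abs_of_nonneg (rpow_nonneg hx _)]
      grw [abs_cos_le_one, mul_one, rpow_le_rpow (y := 1 - r) (z := β) hx (by linarith [hxI.1]) hβ]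
    calc |∫ x in r..r', c x| ≤ (1 - r) ^ β * |r' - r| :=
          intervalIntegral.norm_integral_le_of_norm_le_const hbound
      _ ≤ (1 - r) ^ β * (1 - r) := by
          rw [abs_of_nonneg (sub_nonneg.mpr hr)]
          exact mul_le_mul_of_nonneg_left (by linarith) (rpow_nonneg (by linarith) β)
      _ = (1 - r) ^ (β + 1) := (rpow_add_one (by linarith) β).symm
  have hr₁ := abs_le.mp (hH r ⟨le_rfl, hr⟩)
  have hr₂ := abs_le.mp (hH r' ⟨hr, le_rfl⟩)
  have hc' := abs_le.mp hcint
  have hk : 0 ≤ (β + 1) / b := by positivity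
  have hsplit : (β + 3) / b * (1 - r) ^ (β + 1) =
      2 * (b⁻¹ * (1 - r) ^ (β + 1)) + (β + 1) / b * (1 - r) ^ (β + 1) := by
    field_simp; ring
  rw [abs_le]
  constructor <;> linarith [mul_le_mul_of_nonneg_left hc'.1 hk, mul_le_mul_of_nonneg_left hc'.2 hk]

-- `fEx b β z = fExRadial b β ‖z‖` holds by `rfl`.
noncomputable def fExRadial (b β ρ : ℝ) : ℝ :=
  if ρ < 1 / 2 then 1 else (1 / (ρ * (1 - ρ) ^ (b - β))) * sin (1 / (1 - ρ) ^ b)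

lemma measurable_fExRadial (b β : ℝ) : Measurable (fExRadial b β) :=
  Measurable.ite measurableSet_Iio measurable_const (by fun_prop)

lemma mul_fExRadial_of_le {b β ρ : ℝ} (hρ : 1 / 2 ≤ ρ) (hρ₁ : ρ < 1) :
    ρ * fExRadial b β ρ = sin ((1 - ρ) ^ b)⁻¹ * (1 - ρ) ^ (β - b) := by
  have hx : 0 < 1 - ρ := by linarith
  rw [fExRadial, if_neg hρ.not_gt, rpow_sub hx, rpow_sub hx, one_div, one_div]
  field_simp

lemma abs_mul_fExRadial_le {b β ρ R : ℝ} (hbβ : β ≤ b) (hρ : 0 ≤ ρ) (hρR : ρ ≤ R) (hR : R < 1) :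
    |ρ * fExRadial b β ρ| ≤ (1 - R) ^ (β - b) := by
  have hR' : 0 < 1 - R := by linarith
  by_cases h : ρ < 1 / 2
  · rw [fExRadial, if_pos h, mul_one, abs_of_nonneg hρ]
    exact (by linarith : ρ ≤ 1).trans
      (one_le_rpow_of_pos_of_le_one_of_nonpos hR' (by linarith) (by linarith))
  · rw [mul_fExRadial_of_le (not_lt.mp h) (hρR.trans_lt hR), abs_mul,
      abs_of_pos (rpow_pos_of_pos (by linarith) _)]
    grw [abs_sin_le_one, one_mul]
    · exact rpow_le_rpow_of_nonpos hR' (by linarith) (by linarith)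
    · exact rpow_nonneg (by linarith) _

lemma abs_fExRadial_le {b β ρ R : ℝ} (hbβ : β ≤ b) (hρ : 0 ≤ ρ) (hρR : ρ ≤ R) (hR : R < 1) :
    |fExRadial b β ρ| ≤ max 1 (2 * (1 - R) ^ (β - b)) := by
  by_cases h : ρ < 1 / 2
  · rw [fExRadial, if_pos h, abs_one]
    exact le_max_left _ _
  · have hρ' : 0 < ρ := by linarith
    have hmul := abs_mul_fExRadial_le hbβ hρ hρR hR
    rw [abs_mul, abs_of_pos hρ'] at hmul
    refine le_max_of_le_right ?_
    nlinarith [abs_nonneg (fExRadial b β ρ)]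

lemma integrableOn_fExRadial_norm_polarRect {b β r₁ r₂ : ℝ} (hbβ : β ≤ b) (hr₁ : 0 ≤ r₁)
    (hr₂ : r₂ < 1) (φ₁ φ₂ : ℝ) :
    IntegrableOn (fun ξ : ℂ => fExRadial b β ‖ξ‖) (polarRect r₁ r₂ φ₁ φ₂) := by
  have hK := isCompact_polarRect r₁ r₂ φ₁ φ₂
  refine IntegrableOn.of_bound hK.measure_lt_top
    ((measurable_fExRadial b β).comp measurable_norm).aestronglyMeasurable
    (max 1 (2 * (1 - r₂) ^ (β - b))) ?_
  filter_upwards [ae_restrict_mem hK.measurableSet] with ξ hξ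
  have hξ' := norm_mem_Icc_of_mem_polarRect hr₁ hξ
  exact abs_fExRadial_le hbβ (hr₁.trans hξ'.1) hξ'.2 hr₂

lemma exists_abs_integral_mul_fExRadial_le {b β : ℝ} (hβ : 0 < β) (hbβ : β ≤ b) :
    ∃ C > 0, ∀ r r', 0 ≤ r → r < 1 → r ≤ r' → r' ≤ 1 - (1 - r) / 2 →
      |∫ ρ in r..r', ρ * fExRadial b β ρ| ≤ C * (1 - r) ^ (β + 1) := by
  have hb : 0 < b := hβ.trans_le hbβ
  refine ⟨max ((β + 3) / b) (2 ^ β * (1 / 4) ^ (β - b)), by positivity,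
    fun r r' hr₀ hr₁ hrr' hr' => ?_⟩
  have hx : 0 < 1 - r := by linarith
  rcases le_or_gt (1 / 2) r with h | h
  · calc |∫ ρ in r..r', ρ * fExRadial b β ρ|
          = |∫ ρ in r..r', sin ((1 - ρ) ^ b)⁻¹ * (1 - ρ) ^ (β - b)| := by
            refine congrArg _ (intervalIntegral.integral_congr fun ρ hρ => ?_)
            rw [uIcc_of_le hrr'] at hρ
            exact mul_fExRadial_of_le (h.trans hρ.1) (by linarith [hρ.2])
      _ ≤ (β + 3) / b * (1 - r) ^ (β + 1) :=
            abs_integral_sin_inv_rpow_mul_rpow_le hb hβ.le hrr' (by linarith)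
      _ ≤ _ := by gcongr; exact le_max_left _ _
  · have hbound : ∀ ρ ∈ uIoc r r', ‖ρ * fExRadial b β ρ‖ ≤ (1 / 4) ^ (β - b) := fun ρ hρ => by
      rw [uIoc_of_le hrr'] at hρ
      have := abs_mul_fExRadial_le (R := 3 / 4) hbβ (hr₀.trans hρ.1.le) (by linarith [hρ.2])
        (by norm_num)
      norm_num at this ⊢
      exact this
    have hone : 1 ≤ 2 ^ β * (1 - r) ^ β := by
      rw [← mul_rpow (by norm_num) hx.le]
      exact one_le_rpow (by linarith) hβ.le
    calc |∫ ρ in r..r', ρ * fExRadial b β ρ| ≤ (1 / 4) ^ (β - b) * |r' - r| :=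
          intervalIntegral.norm_integral_le_of_norm_le_const hbound
      _ ≤ (1 / 4) ^ (β - b) * (2 ^ β * (1 - r) ^ β) * (1 - r) := by
          rw [abs_of_nonneg (sub_nonneg.mpr hrr'), mul_assoc]
          gcongr
          nlinarith [mul_le_mul_of_nonneg_right hone hx.le]
      _ = 2 ^ β * (1 / 4) ^ (β - b) * (1 - r) ^ (β + 1) := by
          rw [rpow_add_one hx.ne']; ring
      _ ≤ _ := by gcongr; exact le_max_right _ _

lemma exists_forall_mul_one_sub_rpow_le (A : ℝ) {β ε : ℝ} (hβ : 0 < β) (hε : 0 < ε) :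
    ∃ r₀ < 1, ∀ r, r₀ ≤ r → r < 1 → A * (1 - r) ^ β ≤ ε := by
  have hlim : Tendsto (fun r : ℝ => A * (1 - r) ^ β) (𝓝[<] 1) (𝓝 0) := by
    have hcont : ContinuousAt (fun r : ℝ => A * (1 - r) ^ β) 1 := by
      fun_prop (disch := exact Or.inr hβ.le)
    simpa [zero_rpow hβ.ne'] using hcont.tendsto.mono_left nhdsWithin_le_nhds
  obtain ⟨r₀, hr₀, hsub⟩ := mem_nhdsLT_iff_exists_Ico_subset.mp (hlim (Iic_mem_nhds hε))
  exact ⟨r₀, hr₀, fun r h₀ h₁ => hsub ⟨h₀, h₁⟩⟩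

/-- For `b ≥ β > 0`, the example symbol `f = fEx b β` satisfies the VWMO
condition, and there is `C > 0` with `|f̂(z)| ≤ C (1-|z|)^β` for all `z ∈ 𝔻`; in
particular `f̂(z) → 0` as `|z| → 1`. -/
theorem example_vwmo (b β : ℝ) (hβ : 0 < β) (hbβ : β ≤ b) :
    IsVWMO (fun z => (fEx b β z : ℂ)) ∧
    (∃ C > (0:ℝ), ∀ z ∈ unitDisc,
      ‖avg (fun z => (fEx b β z : ℂ)) z‖ ≤ C * (1 - ‖z‖) ^ β) ∧
    (∀ ε > (0:ℝ), ∃ r₀ < (1:ℝ), ∀ z ∈ unitDisc, r₀ ≤ ‖z‖ →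
      ‖avg (fun z => (fEx b β z : ℂ)) z‖ ≤ ε) := by
  obtain ⟨C, hC, hJ⟩ := exists_abs_integral_mul_fExRadial_le hβ hbβ
  have havg : ∀ z ∈ unitDisc, ‖avg (fun z => (fEx b β z : ℂ)) z‖ ≤ 8 * C * (1 - ‖z‖) ^ β :=
    fun z (hz : ‖z‖ < 1) => norm_avg_le_of_radial hz hC.le
      (hJ _ _ (norm_nonneg z) hz (by linarith [norm_nonneg z]) le_rfl)
  have hwQuot : ∀ z ∈ unitDisc, ∀ ζ ∈ Bz z,
      wQuot (fun z => (fEx b β z : ℂ)) z ζ ≤ 16 * C * (1 - ‖z‖) ^ β :=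
    fun z (hz : ‖z‖ < 1) ζ hζ => wQuot_le_of_radial hz
      (integrableOn_fExRadial_norm_polarRect hbβ (norm_nonneg z) (by linarith) _ _) hζ hC.le
      fun r' hr' => hJ _ _ (norm_nonneg z) hz hr'.1 hr'.2
  refine ⟨fun ε hε => ?_, ⟨8 * C, by positivity, havg⟩, fun ε hε => ?_⟩
  · obtain ⟨r₀, hr₀, hsmall⟩ := exists_forall_mul_one_sub_rpow_le (16 * C) hβ hε
    exact ⟨r₀, hr₀, fun z hz hzr ζ hζ => (hwQuot z hz ζ hζ).trans (hsmall _ hzr hz)⟩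
  · obtain ⟨r₀, hr₀, hsmall⟩ := exists_forall_mul_one_sub_rpow_le (8 * C) hβ hε
    exact ⟨r₀, hr₀, fun z hz hzr => (havg z hz).trans (hsmall _ hzr hz)⟩
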